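/- The polynomial p(u,v) = v³u + v²u² + vu³ − v² − 3vu − u² + 2v + 2u − 1 is irreducible in the polynomial ring ℂ[u,v]. -/

import Mathlib

/-!
Since `p` is symmetric, read it as a cubic in `v` over `ℂ[u]`:
`p = u v³ + (u² - 1) v² + (u - 1)²(u + 2) v - (u - 1)²`.
Its Newton polygon at the prime `u - 1` is the single edge from `(0, 2)` to `(3, 0)`, of
non-integral slope `2/3`, so (Eisenstein–Dumas) the cubic has no root in `ℂ(u)` and is
irreducible there. It is primitive because `u` and `(u - 1)²` are coprime, so Gauss's lemma
gives irreducibility over `ℂ[u]`.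
-/

section

open Polynomial Polynomial.Bivariate

namespace Polynomial

variable {R : Type*} [CommRing R]

theorem isPrimitive_of_isRelPrime_coeff {f : R[X]} {i j : ℕ}
    (h : IsRelPrime (f.coeff i) (f.coeff j)) : f.IsPrimitive := fun _ hr ↦
  h ((C_dvd_iff_dvd_coeff _ _).mp hr i) ((C_dvd_iff_dvd_coeff _ _).mp hr j)

variable [IsDomain R] [UniqueFactorizationMonoid R]

theorem aeval_ne_zero_of_dumas_cubic {K : Type*} [Field K] [Algebra R K] [IsFractionRing R K]
    {f : R[X]} (hf : f.natDegree = 3) {π : R} (hπ : Prime π) (h3 : ¬π ∣ f.coeff 3)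
    (h2 : π ∣ f.coeff 2) (h1 : π ^ 2 ∣ f.coeff 1) (h0 : π ^ 2 ∣ f.coeff 0)
    (h0' : ¬π ^ 3 ∣ f.coeff 0) (x : K) : aeval x f ≠ 0 := by
  intro hx
  set n := IsFractionRing.num R x
  set d : R := (IsFractionRing.den R x : R)
  have hnd : f.coeff 3 * n ^ 3 + f.coeff 2 * n ^ 2 * d + f.coeff 1 * n * d ^ 2 +
      f.coeff 0 * d ^ 3 = 0 := by
    have := num_isRoot_scaleRoots_of_aeval_eq_zero hx
    simp only [IsRoot, eval_eq_sum_range, natDegree_scaleRoots, coeff_scaleRoots, hf,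
      Finset.sum_range_succ, Finset.sum_range_zero] at this
    linear_combination this
  obtain ⟨a2, ha2⟩ := h2
  obtain ⟨a1, ha1⟩ := h1
  obtain ⟨a0, ha0⟩ := h0
  have hn : π ∣ n := by
    refine hπ.dvd_of_dvd_pow (n := 3) ((hπ.dvd_or_dvd ?_).resolve_left h3)
    exact ⟨-(a2 * n ^ 2 * d + π * a1 * n * d ^ 2 + π * a0 * d ^ 3), by
      rw [ha2, ha1, ha0] at hnd; linear_combination hnd⟩
  have hd : ¬π ∣ d := fun hd ↦ hπ.not_isUnit (IsFractionRing.num_den_reduced R x hn hd)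
  obtain ⟨m, hm⟩ := hn
  -- once `π ∣ n`, every term of `hnd` but `f.coeff 0 * d ^ 3` is divisible by `π ^ 3`
  have ha0d : π ∣ a0 * d ^ 3 := by
    refine ⟨-(f.coeff 3 * m ^ 3 + a2 * m ^ 2 * d + a1 * m * d ^ 2), ?_⟩
    refine mul_left_cancel₀ (pow_ne_zero 2 hπ.ne_zero) ?_
    rw [ha2, ha1, ha0, hm] at hnd
    linear_combination hnd
  obtain ⟨c, rfl⟩ := (hπ.dvd_or_dvd ha0d).resolve_right fun h ↦ hd (hπ.dvd_of_dvd_pow h)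
  exact h0' ⟨c, by rw [ha0]; ring⟩

theorem irreducible_of_dumas_cubic {f : R[X]} (hprim : f.IsPrimitive) (hf : f.natDegree = 3)
    {π : R} (hπ : Prime π) (h3 : ¬π ∣ f.coeff 3) (h2 : π ∣ f.coeff 2) (h1 : π ^ 2 ∣ f.coeff 1)
    (h0 : π ^ 2 ∣ f.coeff 0) (h0' : ¬π ^ 3 ∣ f.coeff 0) : Irreducible f := by
  let K := FractionRing R
  refine hprim.irreducible_of_irreducible_map_of_injective (IsFractionRing.injective R K) ?_
  refine irreducible_of_degree_le_three_of_not_isRoot ?_ fun x hx ↦ ?_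
  · rw [natDegree_map_eq_of_injective (IsFractionRing.injective R K), hf]
    decide
  · exact aeval_ne_zero_of_dumas_cubic hf hπ h3 h2 h1 h0 h0' x (by rwa [aeval_def, ← eval_map])

end Polynomial

/-- `p(u, v)` with `u = X` and `v = Y`. -/
noncomputable def sixTwoTwoCubic : ℂ[X][Y] :=
  C X * Y ^ 3 + C (X ^ 2 - 1) * Y ^ 2 + C ((X - C 1) ^ 2 * (X + 2)) * Y + C (-(X - C 1) ^ 2)

theorem irreducible_sixTwoTwoCubic : Irreducible sixTwoTwoCubic := by
  obtain ⟨hc3, hc2, hc1, hc0⟩ : sixTwoTwoCubic.coeff 3 = X ∧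
      sixTwoTwoCubic.coeff 2 = X ^ 2 - 1 ∧ sixTwoTwoCubic.coeff 1 = (X - C 1) ^ 2 * (X + 2) ∧
      sixTwoTwoCubic.coeff 0 = -(X - C 1) ^ 2 := by
    simp only [sixTwoTwoCubic, coeff_add, coeff_C_mul, coeff_X_pow, coeff_X, coeff_C]
    simp
  have hprim : sixTwoTwoCubic.IsPrimitive := by
    refine isPrimitive_of_isRelPrime_coeff (i := 3) (j := 0) (IsCoprime.isRelPrime ?_)
    exact ⟨-(X - 2 : ℂ[X]), -1, by rw [hc3, hc0, C_1]; ring⟩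
  have hπ : Prime (X - C 1 : ℂ[X]) := prime_X_sub_C 1
  have hπ3 : ¬(X - C 1 : ℂ[X]) ^ 3 ∣ (X - C 1) ^ 2 := by
    rw [pow_dvd_pow_iff hπ.ne_zero hπ.not_isUnit]
    decide
  refine irreducible_of_dumas_cubic hprim (natDegree_cubic X_ne_zero) hπ ?_ ?_ ?_ ?_ ?_
  · rw [hc3, dvd_iff_isRoot]
    simp
  · exact hc2 ▸ ⟨X + 1, by rw [C_1]; ring⟩
  · exact hc1 ▸ dvd_mul_right _ _
  · exact hc0 ▸ dvd_neg.mpr dvd_rfl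
  · rwa [hc0, dvd_neg]

end

open MvPolynomial

theorem six_two_two_defining_polynomial_irreducible :
    Irreducible
      ((X 1) ^ 3 * X 0 + (X 1) ^ 2 * (X 0) ^ 2 + X 1 * (X 0) ^ 3 - (X 1) ^ 2 -
          3 * (X 1) * (X 0) - (X 0) ^ 2 + 2 * (X 1) + 2 * (X 0) - 1 :
        MvPolynomial (Fin 2) ℂ) := by
  rw [← MulEquiv.irreducible_iff (Polynomial.Bivariate.equivMvPolynomial ℂ).symm]
  convert irreducible_sixTwoTwoCubic using 1
  simp [sixTwoTwoCubic, map_ofNat]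
  ring
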